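/- arXiv:1604.01515 — 6 statements merged into one kernel-verified Lean document; each statement's English description precedes it below -/
import Mathlib

section
/- Let D : Ω → β be a random variable and Θ_1,…,Θ_M : Ω → α be i.i.d. random variables with common law ν, the family (Θ_1,…,Θ_M, D) being independent. Let g : α × β → ℝ be measurable with g(Θ_1, D) square-integrable, let h(d) := ∫ g(θ, d) dν(θ), and let c ∈ ℝ. Then E[((1/M) Σ_{j=1}^M g(Θ_j, D) − c)²] = E[(h(D) − c)²] + (1/M)(E[g(Θ_1, D)²] − E[h(D)²]). -/
open MeasureTheory ProbabilityTheory

/-!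
Write `Xⱼ = g(Θⱼ, D)` and `H = h(D)`. Since `(Θⱼ, D)` has law `ν ⊗ law(D)` and, for `j ≠ k`,
`((Θⱼ, Θₖ), D)` has law `(ν ⊗ ν) ⊗ law(D)`, Fubini gives `E[Xⱼ] = E[H]`, `E[Xⱼ²] = E[X₁²]` and
`E[Xⱼ Xₖ] = E[H²]`. Expanding the square of the average, the `M` diagonal terms contribute
`E[X₁²]` each and the `M(M - 1)` off-diagonal terms `E[H²]` each, which is exactly the claimed
decomposition.
-/

lemma MeasureTheory.MeasurePreserving.integral_comp_of_aestronglyMeasurable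
    {α γ E : Type*} [MeasurableSpace α] [MeasurableSpace γ] [NormedAddCommGroup E]
    [NormedSpace ℝ E] {μ : Measure α} {ν : Measure γ} {φ : α → γ}
    (hφ : MeasurePreserving φ μ ν) {f : γ → E} (hf : AEStronglyMeasurable f ν) :
    ∫ x, f (φ x) ∂μ = ∫ y, f y ∂ν := by
  rw [← hφ.map_eq] at hf ⊢
  exact (integral_map hφ.aemeasurable hf).symm

section SecondMoments

variable {Ω : Type*} [MeasurableSpace Ω] {μ : Measure Ω}

lemma integral_sq_sum_eq {ι : Type*} [Fintype ι] {X : ι → Ω → ℝ} (hX : ∀ i, MemLp (X i) 2 μ)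
    {s t : ℝ} (hsq : ∀ i, ∫ ω, X i ω ^ 2 ∂μ = s)
    (hcross : ∀ i j, i ≠ j → ∫ ω, X i ω * X j ω ∂μ = t) :
    ∫ ω, (∑ i, X i ω) ^ 2 ∂μ = Fintype.card ι * (s + (Fintype.card ι - 1) * t) := by
  classical
  have hmul : ∀ i j, Integrable (fun ω => X i ω * X j ω) μ := fun i j =>
    (hX i).integrable_mul (hX j)
  have hrow : ∀ i, ∑ j, ∫ ω, X i ω * X j ω ∂μ = s + (Fintype.card ι - 1) * t := by
    intro i
    rw [← Finset.add_sum_erase _ _ (Finset.mem_univ i),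
      Finset.sum_congr rfl fun j hj => hcross i j (Finset.ne_of_mem_erase hj).symm]
    simp [← hsq i, sq, Finset.card_erase_of_mem, Nat.cast_pred (Fintype.card_pos_iff.2 ⟨i⟩)]
  calc ∫ ω, (∑ i, X i ω) ^ 2 ∂μ = ∫ ω, ∑ i, ∑ j, X i ω * X j ω ∂μ := by
        simp_rw [sq, Finset.sum_mul_sum]
    _ = ∑ i, ∑ j, ∫ ω, X i ω * X j ω ∂μ := by
        rw [integral_finsetSum _ fun i _ => integrable_finsetSum _ fun j _ => hmul i j]
        simp_rw [integral_finsetSum _ fun j _ => hmul _ j]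
    _ = _ := by simp [hrow]; ring

variable [IsProbabilityMeasure μ]

lemma integral_sub_const_sq {f : Ω → ℝ} (hf : MemLp f 2 μ) (c : ℝ) :
    ∫ ω, (f ω - c) ^ 2 ∂μ = ∫ ω, f ω ^ 2 ∂μ - 2 * c * ∫ ω, f ω ∂μ + c ^ 2 := by
  have hf1 : Integrable f μ := hf.integrable one_le_two
  have hlin : Integrable (fun ω => 2 * c * f ω) μ := hf1.const_mul _
  calc ∫ ω, (f ω - c) ^ 2 ∂μ = ∫ ω, (f ω ^ 2 - 2 * c * f ω + c ^ 2) ∂μ := by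
        congr 1; ext ω; ring
    _ = _ := by
        have hquad : Integrable (fun ω => f ω ^ 2 - 2 * c * f ω) μ := hf.integrable_sq.sub hlin
        rw [integral_add hquad (integrable_const _), integral_sub hf.integrable_sq hlin,
          integral_const_mul]
        simp

lemma sq_integral_le_integral_sq {f : Ω → ℝ} (hf : Integrable (fun ω => f ω ^ 2) μ) :
    (∫ ω, f ω ∂μ) ^ 2 ≤ ∫ ω, f ω ^ 2 ∂μ := by
  by_cases hm : AEStronglyMeasurable f μ
  · have := integral_sub_const_sq ((memLp_two_iff_integrable_sq hm).2 hf) (∫ ω, f ω ∂μ)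
    have hvar : 0 ≤ ∫ ω, (f ω - ∫ ω, f ω ∂μ) ^ 2 ∂μ := integral_nonneg fun ω => sq_nonneg _
    nlinarith
  · rw [integral_non_aestronglyMeasurable hm]
    simpa using integral_nonneg fun ω => sq_nonneg (f ω)

lemma integral_average_sub_sq {ι : Type*} [Fintype ι] [Nonempty ι] {X : ι → Ω → ℝ}
    {H : Ω → ℝ} {s : ℝ} (hX : ∀ i, MemLp (X i) 2 μ) (hH : MemLp H 2 μ)
    (hmean : ∀ i, ∫ ω, X i ω ∂μ = ∫ ω, H ω ∂μ) (hsq : ∀ i, ∫ ω, X i ω ^ 2 ∂μ = s)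
    (hcross : ∀ i j, i ≠ j → ∫ ω, X i ω * X j ω ∂μ = ∫ ω, H ω ^ 2 ∂μ) (c : ℝ) :
    ∫ ω, ((Fintype.card ι : ℝ)⁻¹ * ∑ i, X i ω - c) ^ 2 ∂μ
      = ∫ ω, (H ω - c) ^ 2 ∂μ + (Fintype.card ι : ℝ)⁻¹ * (s - ∫ ω, H ω ^ 2 ∂μ) := by
  have hn : (Fintype.card ι : ℝ) ≠ 0 := Nat.cast_ne_zero.2 Fintype.card_ne_zero
  have hsum : MemLp (fun ω => ∑ i, X i ω) 2 μ := memLp_finsetSum _ fun i _ => hX i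
  have hsum_mean : ∫ ω, ∑ i, X i ω ∂μ = Fintype.card ι * ∫ ω, H ω ∂μ := by
    simp [integral_finsetSum _ fun i _ => (hX i).integrable one_le_two, hmean]
  rw [integral_sub_const_sq (hsum.const_mul _), integral_sub_const_sq hH]
  simp_rw [mul_pow]
  rw [integral_const_mul, integral_const_mul, integral_sq_sum_eq hX hsq hcross, hsum_mean]
  field_simp
  ring

end SecondMoments

section Forest

variable {Ω α β : Type*} [MeasurableSpace Ω] [MeasurableSpace α] [MeasurableSpace β]
  {μ : Measure Ω} {ν : Measure α} {ρ : Measure β} {g : α × β → ℝ}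

lemma memLp_two_integral_prod_right [IsProbabilityMeasure ν] [SFinite ρ]
    (hg : MemLp g 2 (ν.prod ρ)) : MemLp (fun y => ∫ x, g (x, y) ∂ν) 2 ρ := by
  have hmeas : AEStronglyMeasurable (fun y => ∫ x, g (x, y) ∂ν) ρ :=
    hg.aestronglyMeasurable.prod_swap.integral_prod_right'
  refine (memLp_two_iff_integrable_sq hmeas).2 <|
    hg.integrable_sq.integral_prod_right.mono' (hmeas.pow 2) ?_
  filter_upwards [hg.integrable_sq.prod_left_ae] with y hy
  rw [Real.norm_eq_abs, abs_of_nonneg (sq_nonneg _)]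
  exact sq_integral_le_integral_sq hy

lemma integral_comp_eq_integral_integral [SFinite ν] [SFinite ρ] {X : Ω → α} {Y : Ω → β}
    (hXY : MeasurePreserving (fun ω => (X ω, Y ω)) μ (ν.prod ρ)) (hY : MeasurePreserving Y μ ρ)
    (hg : Integrable g (ν.prod ρ)) :
    ∫ ω, g (X ω, Y ω) ∂μ = ∫ ω, ∫ x, g (x, Y ω) ∂ν ∂μ := by
  rw [hXY.integral_comp_of_aestronglyMeasurable hg.1, integral_prod_symm g hg,
    hY.integral_comp_of_aestronglyMeasurable hg.integral_prod_right.1]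

lemma integral_comp_mul_comp_eq_integral_sq [IsProbabilityMeasure ν] [SFinite ρ]
    {X X' : Ω → α} {Y : Ω → β}
    (hXY : MeasurePreserving (fun ω => ((X ω, X' ω), Y ω)) μ ((ν.prod ν).prod ρ))
    (hY : MeasurePreserving Y μ ρ) (hg : MemLp g 2 (ν.prod ρ)) :
    ∫ ω, g (X ω, Y ω) * g (X' ω, Y ω) ∂μ = ∫ ω, (∫ x, g (x, Y ω) ∂ν) ^ 2 ∂μ := by
  have hfst : MemLp (fun q : (α × α) × β => g (q.1.1, q.2)) 2 ((ν.prod ν).prod ρ) :=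
    hg.comp_measurePreserving (measurePreserving_fst.prod (.id ρ))
  have hsnd : MemLp (fun q : (α × α) × β => g (q.1.2, q.2)) 2 ((ν.prod ν).prod ρ) :=
    hg.comp_measurePreserving (measurePreserving_snd.prod (.id ρ))
  have hprod := hfst.integrable_mul hsnd
  calc ∫ ω, g (X ω, Y ω) * g (X' ω, Y ω) ∂μ
      = ∫ q, g (q.1.1, q.2) * g (q.1.2, q.2) ∂((ν.prod ν).prod ρ) :=
        hXY.integral_comp_of_aestronglyMeasurable hprod.1
    _ = ∫ y, ∫ p, g (p.1, y) * g (p.2, y) ∂(ν.prod ν) ∂ρ := integral_prod_symm _ hprod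
    _ = ∫ y, (∫ x, g (x, y) ∂ν) ^ 2 ∂ρ := by
        congr 1 with y
        exact (integral_prod_mul (fun x => g (x, y)) (fun x => g (x, y))).trans (sq _).symm
    _ = ∫ ω, (∫ x, g (x, Y ω) ∂ν) ^ 2 ∂μ :=
        (hY.integral_comp_of_aestronglyMeasurable
          ((memLp_two_integral_prod_right hg).aestronglyMeasurable.pow 2)).symm

end Forest

lemma ProbabilityTheory.IndepFun.measurePreserving_prodMk {Ω γ δ : Type*} [MeasurableSpace Ω]
    [MeasurableSpace γ] [MeasurableSpace δ] {μ : Measure Ω} [IsFiniteMeasure μ] {X : Ω → γ}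
    {Y : Ω → δ} (hXY : IndepFun X Y μ) (hX : Measurable X) (hY : Measurable Y) :
    MeasurePreserving (fun ω => (X ω, Y ω)) μ ((μ.map X).prod (μ.map Y)) :=
  ⟨hX.prodMk hY, hXY.map_prod_eq_prod_map_map hX.aemeasurable hY.aemeasurable⟩

/-- Risk decomposition of a finite forest: if `Θ₁, …, Θ_M` are i.i.d. with law `ν`,
independent of the data `D`, `g(Θ₁, D)` is square-integrable, and
`h(d) = ∫ g(θ, d) dν(θ)` is the infinite forest, then
`E[((1/M) Σⱼ g(Θⱼ, D) − c)²] = E[(h(D) − c)²] + (1/M)(E[g(Θ₁, D)²] − E[h(D)²])`. -/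
theorem finite_forest_risk_decomposition
    {Ω : Type*} [MeasurableSpace Ω] {μ : Measure Ω} [IsProbabilityMeasure μ]
    {α β : Type*} [MeasurableSpace α] [MeasurableSpace β]
    (M : ℕ) (hM : 0 < M) (Θ : Fin M → Ω → α) (D : Ω → β)
    (hΘ : ∀ j, Measurable (Θ j)) (hD : Measurable D)
    (ν : Measure α) (hlaw : ∀ j, Measure.map (Θ j) μ = ν)
    (hiid : iIndepFun Θ μ)
    (hindep : IndepFun (fun ω j => Θ j ω) D μ)
    (g : α × β → ℝ) (hg : Measurable g)
    (hg2 : MemLp (fun ω => g (Θ ⟨0, hM⟩ ω, D ω)) 2 μ)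
    (c : ℝ) :
    ∫ ω, ((M : ℝ)⁻¹ * ∑ j, g (Θ j ω, D ω) - c) ^ 2 ∂μ
      = ∫ ω, ((∫ θ, g (θ, D ω) ∂ν) - c) ^ 2 ∂μ
        + (M : ℝ)⁻¹ * ((∫ ω, (g (Θ ⟨0, hM⟩ ω, D ω)) ^ 2 ∂μ)
            - ∫ ω, (∫ θ, g (θ, D ω) ∂ν) ^ 2 ∂μ) := by
  have : Nonempty (Fin M) := ⟨⟨0, hM⟩⟩
  have : IsProbabilityMeasure ν :=
    hlaw ⟨0, hM⟩ ▸ Measure.isProbabilityMeasure_map (hΘ _).aemeasurable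
  have hD' : MeasurePreserving D μ (μ.map D) := ⟨hD, rfl⟩
  have hpair (j : Fin M) : MeasurePreserving (fun ω => (Θ j ω, D ω)) μ (ν.prod (μ.map D)) :=
    hlaw j ▸ (hindep.comp (measurable_pi_apply j) measurable_id).measurePreserving_prodMk (hΘ j) hD
  have htriple (j k : Fin M) (hjk : j ≠ k) :
      MeasurePreserving (fun ω => ((Θ j ω, Θ k ω), D ω)) μ ((ν.prod ν).prod (μ.map D)) := by
    have hindep' : IndepFun (fun ω => (Θ j ω, Θ k ω)) D μ :=
      hindep.comp ((measurable_pi_apply j).prodMk (measurable_pi_apply k)) measurable_id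
    have hΘjk := (hiid.indepFun hjk).measurePreserving_prodMk (hΘ j) (hΘ k)
    rw [hlaw j, hlaw k] at hΘjk
    exact hΘjk.map_eq ▸ hindep'.measurePreserving_prodMk ((hΘ j).prodMk (hΘ k)) hD
  have hgL2 : MemLp g 2 (ν.prod (μ.map D)) := by
    rw [← (hpair ⟨0, hM⟩).map_eq]
    exact (memLp_map_measure_iff hg.aestronglyMeasurable (hpair _).aemeasurable).2 hg2
  have hsq (j : Fin M) : ∫ ω, g (Θ j ω, D ω) ^ 2 ∂μ = ∫ ω, g (Θ ⟨0, hM⟩ ω, D ω) ^ 2 ∂μ := by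
    rw [(hpair j).integral_comp_of_aestronglyMeasurable (hg.pow_const 2).aestronglyMeasurable,
      (hpair _).integral_comp_of_aestronglyMeasurable (hg.pow_const 2).aestronglyMeasurable]
  simpa using integral_average_sub_sq (fun j => hgL2.comp_measurePreserving (hpair j))
    ((memLp_two_integral_prod_right hgL2).comp_measurePreserving hD')
    (fun j => integral_comp_eq_integral_integral (hpair j) hD' (hgL2.integrable one_le_two)) hsq
    (fun j k hjk => integral_comp_mul_comp_eq_integral_sq (htriple j k hjk) hD' hgL2) c
end

section
/- Let D : Ω → β be a random variable and Θ_1,…,Θ_M : Ω → α be i.i.d. random variables with common law ν, the family (Θ_1,…,Θ_M, D) being independent. Let g : α × β → ℝ be measurable with g(Θ_1, D) square-integrable, let h(d) := ∫ g(θ, d) dν(θ), and let c ∈ ℝ. Then E[(h(D) − c)²] ≤ E[((1/M) Σ_{j=1}^M g(Θ_j, D) − c)²], i.e., the quadratic risk of the infinite forest is at most that of any finite forest with M trees. -/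
/-!
Conditionally on `D = d`, the trees `Θⱼ` are still i.i.d. with law `ν`, because `(Θ, D)` has law
`ν^M ⊗ law(D)`. The finite forest at `d` therefore has mean `h(d)` under `ν^M`, and the square of
a mean is at most the mean of the square (a variance is nonnegative). Integrating over `d` gives
the inequality.
-/

open MeasureTheory ProbabilityTheory

section

variable {γ β : Type*} [MeasurableSpace γ] [MeasurableSpace β]

lemma sq_integral_le_integral_sq_s5 {ν : Measure γ} [IsProbabilityMeasure ν] {f : γ → ℝ}
    (hf : MemLp f 2 ν) : (∫ x, f x ∂ν) ^ 2 ≤ ∫ x, f x ^ 2 ∂ν := by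
  have h := variance_nonneg f ν
  rw [variance_eq_sub hf] at h
  simpa using h

lemma integral_sq_integral_le_integral_sq_prod {ν : Measure γ} [IsProbabilityMeasure ν]
    {μ : Measure β} [SFinite μ] {f : γ × β → ℝ} (hf : MemLp f 2 (ν.prod μ)) :
    ∫ y, (∫ x, f (x, y) ∂ν) ^ 2 ∂μ ≤ ∫ p, f p ^ 2 ∂(ν.prod μ) := by
  have hsq : Integrable (fun p => f p ^ 2) (ν.prod μ) := hf.integrable_sq
  rw [integral_prod_symm _ hsq]
  refine integral_mono_of_nonneg (.of_forall fun y => sq_nonneg _) hsq.integral_prod_right ?_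
  filter_upwards [hsq.prod_left_ae, hf.aestronglyMeasurable.prodMk_right] with y hy hmeas
  exact sq_integral_le_integral_sq_s5 ((memLp_two_iff_integrable_sq hmeas).mpr hy)

lemma integral_sq_integral_map_le_of_indepFun {Ω : Type*} [MeasurableSpace Ω] {μ : Measure Ω}
    [IsProbabilityMeasure μ] {X : Ω → γ} {Y : Ω → β} (hX : Measurable X) (hY : Measurable Y)
    (hXY : IndepFun X Y μ) {φ : γ × β → ℝ} (hφ : Measurable φ)
    (hφ2 : MemLp (fun ω => φ (X ω, Y ω)) 2 μ) :
    ∫ ω, (∫ x, φ (x, Y ω) ∂(μ.map X)) ^ 2 ∂μ ≤ ∫ ω, φ (X ω, Y ω) ^ 2 ∂μ := by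
  have : IsProbabilityMeasure (μ.map X) := Measure.isProbabilityMeasure_map hX.aemeasurable
  have hXYm : Measurable fun ω => (X ω, Y ω) := hX.prodMk hY
  have hlaw := (indepFun_iff_map_prod_eq_prod_map_map hX.aemeasurable hY.aemeasurable).mp hXY
  have hφ2' : MemLp φ 2 ((μ.map X).prod (μ.map Y)) := by
    rw [← hlaw]
    exact (memLp_map_measure_iff hφ.aestronglyMeasurable hXYm.aemeasurable).mpr hφ2
  calc ∫ ω, (∫ x, φ (x, Y ω) ∂(μ.map X)) ^ 2 ∂μ
      = ∫ y, (∫ x, φ (x, y) ∂(μ.map X)) ^ 2 ∂(μ.map Y) :=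
        (integral_map hY.aemeasurable
          (hφ.stronglyMeasurable.integral_prod_left'.aestronglyMeasurable.pow 2)).symm
    _ ≤ ∫ p, φ p ^ 2 ∂((μ.map X).prod (μ.map Y)) :=
        integral_sq_integral_le_integral_sq_prod hφ2'
    _ = ∫ ω, φ (X ω, Y ω) ^ 2 ∂μ := by
        rw [← hlaw, integral_map hXYm.aemeasurable (hφ.pow_const 2).aestronglyMeasurable]

lemma integral_average_comp_eval_sub_const {ι : Type*} [Fintype ι] [Nonempty ι] {ν : Measure γ}
    [IsProbabilityMeasure ν] {f : γ → ℝ} (hf : Integrable f ν) (c : ℝ) :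
    ∫ θ, (Fintype.card ι : ℝ)⁻¹ * ∑ i, f (θ i) - c ∂(Measure.pi fun _ : ι => ν)
      = ∫ x, f x ∂ν - c := by
  have hsum : Integrable (fun θ : ι → γ => ∑ i, f (θ i)) (Measure.pi fun _ => ν) :=
    integrable_finsetSum _ fun i _ => integrable_comp_eval hf
  rw [integral_sub (hsum.const_mul _) (integrable_const c), integral_const_mul,
    integral_finsetSum _ fun i _ => integrable_comp_eval hf]
  simp [integral_comp_eval (μ := fun _ : ι => ν) hf.aestronglyMeasurable]

end

/-- The infinite forest has the smallest quadratic risk: if `Θ₁, …, Θ_M` are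
i.i.d. with law `ν`, independent of the data `D`, `g(Θ₁, D)` is
square-integrable, and `h(d) = ∫ g(θ, d) dν(θ)` is the infinite forest, then
`E[(h(D) − c)²] ≤ E[((1/M) Σⱼ g(Θⱼ, D) − c)²]`. -/
theorem infinite_forest_risk_le_finite_forest_risk
    {Ω : Type*} [MeasurableSpace Ω] {μ : Measure Ω} [IsProbabilityMeasure μ]
    {α β : Type*} [MeasurableSpace α] [MeasurableSpace β]
    (M : ℕ) (hM : 0 < M) (Θ : Fin M → Ω → α) (D : Ω → β)
    (hΘ : ∀ j, Measurable (Θ j)) (hD : Measurable D)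
    (ν : Measure α) (hlaw : ∀ j, Measure.map (Θ j) μ = ν)
    (hiid : iIndepFun Θ μ)
    (hindep : IndepFun (fun ω j => Θ j ω) D μ)
    (g : α × β → ℝ) (hg : Measurable g)
    (hg2 : MemLp (fun ω => g (Θ ⟨0, hM⟩ ω, D ω)) 2 μ)
    (c : ℝ) :
    ∫ ω, ((∫ θ, g (θ, D ω) ∂ν) - c) ^ 2 ∂μ
      ≤ ∫ ω, ((M : ℝ)⁻¹ * ∑ j, g (Θ j ω, D ω) - c) ^ 2 ∂μ := by
  have : IsProbabilityMeasure ν :=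
    hlaw ⟨0, hM⟩ ▸ Measure.isProbabilityMeasure_map (hΘ _).aemeasurable
  have hlawΘ : μ.map (fun ω j => Θ j ω) = Measure.pi fun _ => ν := by
    simp_rw [hiid.map_fun_eq_pi_map fun j => (hΘ j).aemeasurable, hlaw]
  have hlawΘD (j) : μ.map (fun ω => (Θ j ω, D ω)) = ν.prod (μ.map D) := by
    rw [(hindep.comp (measurable_pi_apply j) measurable_id).map_prod_eq_prod_map_map
      (hΘ j).aemeasurable hD.aemeasurable, hlaw j]
  have htree (j) : MemLp (fun ω => g (Θ j ω, D ω)) 2 μ :=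
    (IdentDistrib.comp ⟨((hΘ _).prodMk hD).aemeasurable, ((hΘ j).prodMk hD).aemeasurable,
      (hlawΘD _).trans (hlawΘD j).symm⟩ hg).memLp_snd hg2
  have hfiber : ∀ᵐ ω ∂μ, Integrable (fun θ => g (θ, D ω)) ν := by
    have hgint : Integrable g (ν.prod (μ.map D)) := by
      rw [← hlawΘD ⟨0, hM⟩]
      exact (integrable_map_measure hg.aestronglyMeasurable ((hΘ _).prodMk hD).aemeasurable).mpr
        (hg2.integrable one_le_two)
    exact ae_of_ae_map hD.aemeasurable hgint.prod_left_ae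
  have hforest := integral_sq_integral_map_le_of_indepFun (measurable_pi_lambda _ hΘ) hD hindep
    (φ := fun p => (M : ℝ)⁻¹ * ∑ j, g (p.1 j, p.2) - c) (by fun_prop)
    (((memLp_finsetSum _ fun j _ => htree j).const_mul (M : ℝ)⁻¹).sub (memLp_const c))
  refine le_of_eq_of_le (integral_congr_ae ?_) hforest
  filter_upwards [hfiber] with ω hω
  have : Nonempty (Fin M) := ⟨⟨0, hM⟩⟩
  have hmean := integral_average_comp_eval_sub_const (ι := Fin M) hω c
  rw [Fintype.card_fin] at hmean
  rw [hlawΘ, hmean]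
end

section
/- For all real numbers a and b, the Lebesgue measure of the set {t ∈ [0,1] : ⌊a + t⌋ = ⌊b + t⌋} equals max(0, 1 − |a − b|). In particular, for an integer k ≥ 2 and x, y ∈ [0,1], if T is uniformly distributed on [0,1] then the probability that x and y lie in the same cell of the toy partition with offset T (i.e., that ⌊kx + T⌋ = ⌊ky + T⌋) equals max(0, 1 − k|x − y|). -/
/-!
The set of offsets `t` with `⌊a + t⌋ = ⌊b + t⌋` is invariant under integer translations, so its
measure inside `[0, 1]` equals its measure inside any other period, in particular `[-b, -b + 1)`.
There `⌊b + t⌋ = 0`, so the condition reads `a + t ∈ [0, 1)` and the set is the intersection of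
two unit intervals offset by `|a - b|`.
-/

open MeasureTheory Set

def sameCellOffsets (a b : ℝ) : Set ℝ := {t | ⌊a + t⌋ = ⌊b + t⌋}

lemma measurableSet_sameCellOffsets (a b : ℝ) : MeasurableSet (sameCellOffsets a b) :=
  measurableSet_eq_fun (Int.measurable_floor.comp (measurable_const_add a))
    (Int.measurable_floor.comp (measurable_const_add b))

lemma vadd_preimage_sameCellOffsets (a b : ℝ) (g : AddSubgroup.zmultiples (1 : ℝ)) :
    (g +ᵥ ·) ⁻¹' sameCellOffsets a b = sameCellOffsets a b := by
  obtain ⟨g, n, rfl⟩ := g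
  ext t
  simp [sameCellOffsets, add_left_comm _ (n : ℝ)]

lemma sameCellOffsets_inter_Ico (a b : ℝ) :
    sameCellOffsets a b ∩ Ico (-b) (-b + 1) = Ico (-a) (-a + 1) ∩ Ico (-b) (-b + 1) := by
  ext t
  simp only [sameCellOffsets, mem_inter_iff, mem_ofPred_eq, and_congr_left_iff]
  intro ht
  have hb : ⌊b + t⌋ = 0 := Int.floor_eq_zero_iff.2 ⟨by linarith [ht.1], by linarith [ht.2]⟩
  rw [hb, Int.floor_eq_zero_iff]
  constructor <;> rintro ⟨h₀, h₁⟩ <;> constructor <;> linarith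

lemma volume_sameCellOffsets_inter_Icc (a b : ℝ) :
    volume (sameCellOffsets a b ∩ Icc 0 1) = ENNReal.ofReal (1 - |a - b|) := by
  have hfund (c : ℝ) := isAddFundamentalDomain_Ioc zero_lt_one c
  calc volume (sameCellOffsets a b ∩ Icc 0 1)
      = volume (sameCellOffsets a b ∩ Ioc 0 (0 + 1)) := by
        rw [zero_add]; exact measure_congr (ae_eq_set_inter (by rfl) Ioc_ae_eq_Icc.symm)
    _ = volume (sameCellOffsets a b ∩ Ioc (-b) (-b + 1)) :=
        (hfund 0).measure_set_eq (hfund (-b)) (measurableSet_sameCellOffsets a b)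
          (vadd_preimage_sameCellOffsets a b)
    _ = volume (sameCellOffsets a b ∩ Ico (-b) (-b + 1)) :=
        measure_congr (ae_eq_set_inter (by rfl) Ico_ae_eq_Ioc.symm)
    _ = ENNReal.ofReal (1 - |a - b|) := by
        rw [sameCellOffsets_inter_Ico, Ico_inter_Ico, Real.volume_Ico, ← max_sub_min_eq_abs,
          min_add_add_right, max_neg_neg, min_neg_neg, max_comm, min_comm]
        ring_nf

lemma measure_floor_add_eq_floor_add_of_map_eq {Ω : Type*} [MeasurableSpace Ω] {μ : Measure Ω}
    {T : Ω → ℝ} (hT : Measurable T) (hTunif : μ.map T = volume.restrict (Icc 0 1)) (a b : ℝ) :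
    μ {ω | ⌊a + T ω⌋ = ⌊b + T ω⌋} = ENNReal.ofReal (1 - |a - b|) := by
  have hS := measurableSet_sameCellOffsets a b
  change μ (T ⁻¹' sameCellOffsets a b) = _
  rw [← Measure.map_apply hT hS, hTunif, Measure.restrict_apply hS,
    volume_sameCellOffsets_inter_Icc]

theorem toy_partition_same_cell_probability_general
    (a b : ℝ) (k : ℕ) (x y : ℝ)
    {Ω : Type*} [MeasurableSpace Ω] (μ : Measure Ω)
    (T : Ω → ℝ) (hT : Measurable T)
    (hTunif : Measure.map T μ = volume.restrict (Set.Icc (0 : ℝ) 1)) :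
    volume {t ∈ Set.Icc (0 : ℝ) 1 | ⌊a + t⌋ = ⌊b + t⌋}
        = ENNReal.ofReal (max 0 (1 - |a - b|)) ∧
      μ {ω | ⌊(k : ℝ) * x + T ω⌋ = ⌊(k : ℝ) * y + T ω⌋}
        = ENNReal.ofReal (max 0 (1 - k * |x - y|)) := by
  simp only [ENNReal.ofReal_max, ENNReal.ofReal_zero, zero_max]
  constructor
  · rw [← volume_sameCellOffsets_inter_Icc, inter_comm]
    rfl
  · rw [measure_floor_add_eq_floor_add_of_map_eq hT hTunif, ← mul_sub, abs_mul, Nat.abs_cast]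

/-- For all reals `a, b`, the Lebesgue measure of `{t ∈ [0,1] : ⌊a+t⌋ = ⌊b+t⌋}` is
`max 0 (1 − |a − b|)`. In particular, for `k ≥ 2`, `x, y ∈ [0,1]` and `T` uniform
on `[0,1]`, the probability that `x` and `y` lie in the same cell of the toy
partition with offset `T` (i.e. `⌊kx + T⌋ = ⌊ky + T⌋`) is `max 0 (1 − k|x − y|)`. -/
theorem toy_partition_same_cell_probability
    (a b : ℝ) (k : ℕ) (hk : 2 ≤ k) (x y : ℝ)
    (hx : x ∈ Set.Icc (0 : ℝ) 1) (hy : y ∈ Set.Icc (0 : ℝ) 1)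
    {Ω : Type*} [MeasurableSpace Ω] (μ : Measure Ω) [IsProbabilityMeasure μ]
    (T : Ω → ℝ) (hT : Measurable T)
    (hTunif : Measure.map T μ = volume.restrict (Set.Icc (0 : ℝ) 1)) :
    volume {t ∈ Set.Icc (0 : ℝ) 1 | ⌊a + t⌋ = ⌊b + t⌋}
        = ENNReal.ofReal (max 0 (1 - |a - b|)) ∧
      μ {ω | ⌊(k : ℝ) * x + T ω⌋ = ⌊(k : ℝ) * y + T ω⌋}
        = ENNReal.ofReal (max 0 (1 - k * |x - y|)) :=
  toy_partition_same_cell_probability_general a b k x y μ T hT hTunif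
end

section
/- Let k ≥ 2, a, n, M be positive integers with a ≤ n, and let x ∈ [1/k, 1 − 1/k]. On a probability space, let X, U_1,…,U_M be independent random variables, each uniformly distributed on [0,1]. Set q := max(0, 1 − k|X − x|), B_j := 1_{{U_j ≤ (a/n)·q}} for j = 1,…,M, and W̃ := (k/(aM)) Σ_{j=1}^M B_j. Then E[W̃²] = (k/(na)) · [ (1 − 1/M)·(2a)/(3n) + 1/M ]. -/
/-!
Conditionally on `X`, the `Bⱼ` are i.i.d. Bernoulli variables with parameter `g X`, where
`g = (a/n) q`. Hence `E[Bⱼ Bₗ]` is `E[g X]` on the diagonal and `E[(g X)²]` off it. Because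
`x ∈ [1/k, 1 - 1/k]`, the tent `q` is supported inside `[0, 1]`, so
`E[(g X)^p] = (a/n)^p · 2/((p+1)k)`. Summing `M` diagonal and `M(M-1)` off-diagonal terms gives
the formula. The conditioning on `X` is realised by Fubini on the joint law, which independence
turns into a product measure.
-/

open MeasureTheory ProbabilityTheory Set

def tent (k x t : ℝ) : ℝ := max 0 (1 - k * |t - x|)

section Tent

variable {k x : ℝ}

lemma tent_nonneg (t : ℝ) : 0 ≤ tent k x t := le_max_left _ _

lemma tent_le_one (hk : 0 ≤ k) (t : ℝ) : tent k x t ≤ 1 :=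
  max_le zero_le_one (by nlinarith [abs_nonneg (t - x)])

lemma measurable_tent : Measurable (tent k x) := by
  unfold tent; fun_prop

lemma tent_eq_zero {t : ℝ} (hk : 0 < k) (h : 1 / k ≤ |t - x|) : tent k x t = 0 := by
  rw [div_le_iff₀ hk] at h
  exact max_eq_left (by linarith)

lemma integral_tent_pow (hk : 0 < k) {p : ℕ} (hp : p ≠ 0) :
    ∫ t, tent k x t ^ p = 2 / ((p + 1) * k) := by
  have hzero : ∀ u ∈ Ioi (0:ℝ) \ Ioc 0 (1 / k), max 0 (1 - k * u) ^ p = 0 := by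
    rintro u ⟨hu, hu'⟩
    have : 1 / k < u := by simpa [mem_Ioi.mp hu] using hu'
    rw [max_eq_left (by rw [div_lt_iff₀ hk] at this; linarith), zero_pow hp]
  have hpos : EqOn (fun u => max 0 (1 - k * u) ^ p) (fun u => (1 - k * u) ^ p)
      (Ioc 0 (1 / k)) := by
    rintro u ⟨-, hu⟩
    rw [le_div_iff₀ hk] at hu
    simp only [max_eq_right (by linarith : 0 ≤ 1 - k * u)]
  calc ∫ t, tent k x t ^ p = ∫ u, max 0 (1 - k * |u|) ^ p := by
        simpa [tent] using integral_sub_right_eq_self (fun u => tent k 0 u ^ p) x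
    _ = 2 * ∫ u in Ioc 0 (1 / k), max 0 (1 - k * u) ^ p := by
        rw [integral_comp_abs (f := fun u => max 0 (1 - k * u) ^ p),
          setIntegral_eq_of_subset_of_forall_sdiff_eq_zero measurableSet_Ioi Ioc_subset_Ioi_self
            hzero]
    _ = 2 * ∫ u in (0:ℝ)..1 / k, (1 - k * u) ^ p := by
        rw [intervalIntegral.integral_of_le (by positivity),
          setIntegral_congr_fun measurableSet_Ioc hpos]
    _ = 2 / ((p + 1) * k) := by
        rw [intervalIntegral.integral_comp_sub_mul (fun u => u ^ p) hk.ne']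
        simp [integral_pow, hk.ne']
        field_simp

lemma setIntegral_Icc_tent_pow (hk : 0 < k) (hx : x ∈ Icc (1 / k) (1 - 1 / k)) {p : ℕ}
    (hp : p ≠ 0) : ∫ t in Icc 0 1, tent k x t ^ p = 2 / ((p + 1) * k) := by
  rw [setIntegral_eq_integral_of_forall_compl_eq_zero, integral_tent_pow hk hp]
  intro t ht
  have hfar : 1 / k ≤ |t - x| := by
    by_contra! hnear
    exact ht ⟨by linarith [(abs_lt.mp hnear).1, hx.1], by linarith [(abs_lt.mp hnear).2, hx.2]⟩
  rw [tent_eq_zero hk hfar, zero_pow hp]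

end Tent

lemma integral_ite_le_uniform {c : ℝ} (h0 : 0 ≤ c) (h1 : c ≤ 1) :
    ∫ u, (if u ≤ c then (1:ℝ) else 0) ∂volume.restrict (Icc 0 1) = c := by
  have hind : (fun u : ℝ => if u ≤ c then (1:ℝ) else 0) = (Iic c).indicator 1 := by
    ext u; simp [indicator, mem_Iic]
  have hinter : Iic c ∩ Icc 0 1 = Icc 0 c := by
    ext u; simp only [mem_inter_iff, mem_Iic, mem_Icc]; grind
  rw [hind, integral_indicator_one measurableSet_Iic, measureReal_restrict_apply measurableSet_Iic,
    hinter, Real.volume_real_Icc_of_le h0, sub_zero]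

lemma Finset.sum_sum_ite_eq_const {ι R : Type*} [Fintype ι] [DecidableEq ι] [CommRing R]
    (A C : R) :
    ∑ i : ι, ∑ j : ι, (if i = j then A else C)
      = Fintype.card ι * (A + (Fintype.card ι - 1) * C) := by
  have hrow : ∀ i : ι, ∑ j : ι, (if i = j then A else C) = A + (Fintype.card ι - 1) * C := by
    intro i
    rw [← Finset.add_sum_erase _ _ (Finset.mem_univ i), if_pos rfl,
      Finset.sum_congr rfl fun j hj => if_neg (Finset.ne_of_mem_erase hj).symm]
    simp [Finset.card_erase_of_mem, Nat.cast_sub (Fintype.card_pos_iff.mpr ⟨i⟩)]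
  simp only [hrow, Finset.sum_const, Finset.card_univ, nsmul_eq_mul]

section Independence

variable {Ω α β : Type*} [MeasurableSpace Ω] [MeasurableSpace α] [MeasurableSpace β]
  {μ : Measure Ω}

lemma integral_sq_const_mul_sum {ι : Type*} [Fintype ι] (c : ℝ) {B : ι → Ω → ℝ}
    (hB : ∀ j l, Integrable (fun ω => B j ω * B l ω) μ) :
    ∫ ω, (c * ∑ j, B j ω) ^ 2 ∂μ = c ^ 2 * ∑ j, ∑ l, ∫ ω, B j ω * B l ω ∂μ := by
  simp_rw [mul_pow, sq (Finset.sum _ _), Finset.sum_mul_sum]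
  rw [integral_const_mul, integral_finsetSum _ fun j _ => integrable_finsetSum _ fun l _ => hB j l]
  simp_rw [integral_finsetSum _ fun l _ => hB _ l]

lemma integrable_ite_le_mul_ite_le [IsFiniteMeasure μ] {U V P : Ω → ℝ} (hU : Measurable U)
    (hV : Measurable V) (hP : Measurable P) :
    Integrable (fun ω => (if U ω ≤ P ω then (1:ℝ) else 0) * (if V ω ≤ P ω then 1 else 0)) μ := by
  refine Integrable.of_bound ?_ 1 (ae_of_all _ fun ω => ?_)
  · exact ((Measurable.ite (measurableSet_le hU hP) measurable_const measurable_const).mul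
      (Measurable.ite (measurableSet_le hV hP) measurable_const measurable_const)).aestronglyMeasurable
  · split_ifs <;> simp

variable [IsFiniteMeasure μ]

lemma ProbabilityTheory.IndepFun.integral_comp_eq_integral_integral {X : Ω → α} {Y : Ω → β}
    (hXY : IndepFun X Y μ) (hX : Measurable X) (hY : Measurable Y) {f : α × β → ℝ}
    (hf : Integrable f ((μ.map X).prod (μ.map Y))) :
    ∫ ω, f (X ω, Y ω) ∂μ = ∫ s, ∫ t, f (s, t) ∂μ.map Y ∂μ.map X := by
  have hmap := (indepFun_iff_map_prod_eq_prod_map_map hX.aemeasurable hY.aemeasurable).mp hXY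
  rw [← integral_prod f hf, ← hmap,
    integral_map (hX.prodMk hY).aemeasurable (hmap ▸ hf.aestronglyMeasurable)]

section Uniform

variable {X : Ω → α} {U V : Ω → ℝ} {g : α → ℝ}

lemma integral_ite_le_comp_of_indepFun (hXU : IndepFun X U μ) (hX : Measurable X)
    (hU : Measurable U) (hUunif : μ.map U = volume.restrict (Icc 0 1)) (hg : Measurable g)
    (hg0 : ∀ s, 0 ≤ g s) (hg1 : ∀ s, g s ≤ 1) :
    ∫ ω, (if U ω ≤ g (X ω) then (1:ℝ) else 0) ∂μ = ∫ ω, g (X ω) ∂μ := by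
  have hf : Measurable fun p : α × ℝ => if p.2 ≤ g p.1 then (1:ℝ) else 0 :=
    Measurable.ite (measurableSet_le measurable_snd (hg.comp measurable_fst))
      measurable_const measurable_const
  have hfi : Integrable (fun p : α × ℝ => if p.2 ≤ g p.1 then (1:ℝ) else 0)
      ((μ.map X).prod (μ.map U)) := by
    refine Integrable.of_bound hf.aestronglyMeasurable 1 (ae_of_all _ fun p => ?_)
    split_ifs <;> simp
  rw [hXU.integral_comp_eq_integral_integral hX hU hfi, hUunif,
    ← integral_map hX.aemeasurable hg.aestronglyMeasurable]
  simp_rw [integral_ite_le_uniform (hg0 _) (hg1 _)]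

lemma integral_ite_le_mul_ite_le_comp_of_indepFun (hXUV : IndepFun X (fun ω => (U ω, V ω)) μ)
    (hUV : IndepFun U V μ) (hX : Measurable X) (hU : Measurable U) (hV : Measurable V)
    (hUunif : μ.map U = volume.restrict (Icc 0 1)) (hVunif : μ.map V = volume.restrict (Icc 0 1))
    (hg : Measurable g) (hg0 : ∀ s, 0 ≤ g s) (hg1 : ∀ s, g s ≤ 1) :
    ∫ ω, (if U ω ≤ g (X ω) then (1:ℝ) else 0) * (if V ω ≤ g (X ω) then 1 else 0) ∂μ
      = ∫ ω, g (X ω) ^ 2 ∂μ := by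
  have hgX : Measurable fun p : α × (ℝ × ℝ) => g p.1 := hg.comp measurable_fst
  have hfi := integrable_ite_le_mul_ite_le
    (μ := (μ.map X).prod (μ.map fun ω => (U ω, V ω))) measurable_snd.fst measurable_snd.snd hgX
  have hUVunif : μ.map (fun ω => (U ω, V ω))
      = (volume.restrict (Icc 0 1)).prod (volume.restrict (Icc 0 1)) := by
    rw [(indepFun_iff_map_prod_eq_prod_map_map hU.aemeasurable hV.aemeasurable).mp hUV, hUunif,
      hVunif]
  rw [hXUV.integral_comp_eq_integral_integral hX (hU.prodMk hV) hfi, hUVunif,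
    ← integral_map hX.aemeasurable (hg.pow_const 2).aestronglyMeasurable]
  congr 1 with s
  rw [integral_prod_mul (fun u => if u ≤ g s then (1:ℝ) else 0)
    (fun u => if u ≤ g s then (1:ℝ) else 0), integral_ite_le_uniform (hg0 s) (hg1 s), sq]

end Uniform

lemma integral_ite_le_mul_ite_le_of_iIndepFun_cons {M : ℕ} {X : Ω → ℝ} {U : Fin M → Ω → ℝ}
    {g : ℝ → ℝ} (hindep : iIndepFun (Fin.cons (α := fun _ : Fin (M + 1) => Ω → ℝ) X U) μ)
    (hX : Measurable X) (hU : ∀ j, Measurable (U j))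
    (hUunif : ∀ j, μ.map (U j) = volume.restrict (Icc 0 1))
    (hg : Measurable g) (hg0 : ∀ s, 0 ≤ g s) (hg1 : ∀ s, g s ≤ 1) (j l : Fin M) :
    ∫ ω, (if U j ω ≤ g (X ω) then (1:ℝ) else 0) * (if U l ω ≤ g (X ω) then 1 else 0) ∂μ
      = if j = l then ∫ ω, g (X ω) ∂μ else ∫ ω, g (X ω) ^ 2 ∂μ := by
  split_ifs with hjl
  · subst hjl
    simp only [ite_zero_mul_ite_zero, and_self, mul_one]
    exact integral_ite_le_comp_of_indepFun
      (by simpa using hindep.indepFun (Fin.succ_ne_zero j).symm) hX (hU j) (hUunif j) hg hg0 hg1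
  · have hcons : ∀ i, Measurable (Fin.cons (α := fun _ : Fin (M + 1) => Ω → ℝ) X U i) :=
      fun i => Fin.cases hX hU i
    exact integral_ite_le_mul_ite_le_comp_of_indepFun
      (by simpa using (hindep.indepFun_prodMk hcons j.succ l.succ 0 (Fin.succ_ne_zero j)
        (Fin.succ_ne_zero l)).symm)
      (by simpa using hindep.indepFun ((Fin.succ_injective _).ne hjl)) hX (hU j) (hU l)
      (hUunif j) (hUunif l) hg hg0 hg1

end Independence

/-- Second moment of the approximated toy-forest weight: with `X, U₁, …, U_M`
independent uniforms on `[0,1]`, `k ≥ 2`, `a ≤ n`, `x ∈ [1/k, 1 − 1/k]`,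
`q = max 0 (1 − k|X − x|)`, `Bⱼ = 1_{Uⱼ ≤ (a/n)q}` and `W̃ = (k/(aM)) Σⱼ Bⱼ`,
one has `E[W̃²] = (k/(na)) ((1 − 1/M)(2a)/(3n) + 1/M)`. -/
theorem toy_weight_second_moment
    (k a n M : ℕ) (hk : 2 ≤ k) (ha : 0 < a) (han : a ≤ n) (hM : 0 < M)
    (x : ℝ) (hx : x ∈ Set.Icc (1 / (k : ℝ)) (1 - 1 / (k : ℝ)))
    {Ω : Type*} [MeasurableSpace Ω] (μ : Measure Ω) [IsProbabilityMeasure μ]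
    (X : Ω → ℝ) (U : Fin M → Ω → ℝ)
    (hXm : Measurable X) (hUm : ∀ j, Measurable (U j))
    (hindep : iIndepFun
      (Fin.cons (α := fun _ : Fin (M + 1) => Ω → ℝ) X U) μ)
    (hXunif : Measure.map X μ = volume.restrict (Set.Icc (0 : ℝ) 1))
    (hUunif : ∀ j, Measure.map (U j) μ = volume.restrict (Set.Icc (0 : ℝ) 1))
    (q : Ω → ℝ) (hq : q = fun ω => max 0 (1 - k * |X ω - x|))
    (B : Fin M → Ω → ℝ)
    (hB : B = fun j ω => if U j ω ≤ ((a : ℝ) / n) * q ω then 1 else 0)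
    (W : Ω → ℝ) (hW : W = fun ω => ((k : ℝ) / (a * M)) * ∑ j, B j ω) :
    ∫ ω, W ω ^ 2 ∂μ
      = ((k : ℝ) / (n * a)) *
          ((1 - 1 / (M : ℝ)) * (2 * a) / (3 * n) + 1 / (M : ℝ)) := by
  have hk0 : (0:ℝ) < k := by exact_mod_cast (by omega : 0 < k)
  have hn0 : (0:ℝ) < n := by exact_mod_cast ha.trans_le han
  set g : ℝ → ℝ := fun t => (a / n : ℝ) * tent k x t
  have hg : Measurable g := measurable_tent.const_mul _
  have hg0 : ∀ t, 0 ≤ g t := fun t => mul_nonneg (by positivity) (tent_nonneg t)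
  have hg1 : ∀ t, g t ≤ 1 := fun t => mul_le_one₀
    ((div_le_one hn0).mpr (by exact_mod_cast han)) (tent_nonneg t) (tent_le_one hk0.le t)
  have hmoment : ∀ p : ℕ, p ≠ 0 → ∫ ω, g (X ω) ^ p ∂μ = (a / n : ℝ) ^ p * (2 / ((p + 1) * k)) := by
    intro p hp
    rw [← integral_map hXm.aemeasurable (hg.pow_const p).aestronglyMeasurable, hXunif]
    simp only [g, mul_pow]
    rw [integral_const_mul, setIntegral_Icc_tent_pow hk0 hx hp]
  have hBg : B = fun j ω => if U j ω ≤ g (X ω) then 1 else 0 := by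
    subst hB hq
    rfl
  rw [hW, integral_sq_const_mul_sum _ fun j l => hBg ▸
      integrable_ite_le_mul_ite_le (hUm j) (hUm l) (hg.comp hXm), hBg]
  simp only [integral_ite_le_mul_ite_le_of_iIndepFun_cons hindep hXm hUm hUunif hg hg0 hg1]
  rw [Finset.sum_sum_ite_eq_const, Fintype.card_fin]
  have hmean : ∫ ω, g (X ω) ∂μ = a / n * (2 / ((1 + 1) * k)) := by
    simpa only [pow_one, Nat.cast_one] using hmoment 1 one_ne_zero
  rw [hmean, hmoment 2 two_ne_zero]
  field_simp
  ring
end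

section
/- Let m : ℝ → ℝ be three times continuously differentiable and let x ∈ (0,1). For each integer k with 1/k ≤ x ≤ 1 − 1/k and each t ∈ [0,1], define ψ_k(x,t) := k ∫ m(u) du over the interval [(⌊kx+t⌋ − t)/k, (⌊kx+t⌋ + 1 − t)/k] (the cell containing x in the toy partition with offset t). Then lim_{k→∞} k² ∫_0^1 (ψ_k(x,t) − m(x))² dt = m′(x)²/12. -/
/-!
Writing `s = fract (k x + t)`, the cell of the offset-`t` partition containing `x` is
`[x - s/k, x + (1 - s)/k]`: it has width `1/k` and midpoint `x + (1/2 - s)/k`. Averaging the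
first-order Taylor expansion of `m` at `x` over it gives
`k (ψ_k(x,t) - m(x)) = m'(x) (1/2 - s) + o(1)` uniformly in `t`. As `t` runs over `[0,1]`,
`s` runs over `[0,1)` once, so `k² ∫₀¹ (ψ_k(x,t) - m(x))² dt → m'(x)² ∫₀¹ (1/2 - s)² ds = m'(x)²/12`.
-/

open Filter intervalIntegral MeasureTheory Topology

theorem integral_comp_fract_add {E : Type*} [NormedAddCommGroup E] [NormedSpace ℝ E]
    (φ : ℝ → E) (y : ℝ) :
    ∫ t in (0 : ℝ)..1, φ (Int.fract (y + t)) = ∫ t in (0 : ℝ)..1, φ t := by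
  calc ∫ t in (0 : ℝ)..1, φ (Int.fract (y + t))
      = ∫ u in y..y + 1, φ (Int.fract u) := by
        simpa using integral_comp_add_left (a := 0) (b := 1) (fun u => φ (Int.fract u)) y
    _ = ∫ u in (0 : ℝ)..0 + 1, φ (Int.fract u) :=
        ((Int.fract_periodic ℝ).comp φ).intervalIntegral_add_eq y 0
    _ = ∫ t in (0 : ℝ)..1, φ t := by
        simp only [zero_add, integral_of_le zero_le_one, integral_Ioc_eq_integral_Ioo]
        exact setIntegral_congr_fun measurableSet_Ioo fun u hu => by
          rw [Int.fract_eq_self.2 ⟨hu.1.le, hu.2⟩]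

theorem integral_sq_half_sub_fract_add (y : ℝ) :
    ∫ t in (0 : ℝ)..1, (1 / 2 - Int.fract (y + t)) ^ 2 = 1 / 12 := by
  rw [integral_comp_fract_add (fun s => (1 / 2 - s) ^ 2), integral_comp_sub_left (· ^ 2)]
  norm_num [integral_pow]

theorem measurable_intervalIntegral_of_continuous {α : Type*} [MeasurableSpace α] {f : ℝ → ℝ}
    (hf : Continuous f) {a b : α → ℝ} (ha : Measurable a) (hb : Measurable b) :
    Measurable fun s => ∫ u in a s..b s, f u := by
  have hF : Continuous fun z => ∫ u in (0 : ℝ)..z, f u :=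
    continuous_primitive (fun _ _ => hf.intervalIntegrable _ _) 0
  simp_rw [← integral_interval_sub_left (hf.intervalIntegrable 0 (b _))
    (hf.intervalIntegrable 0 (a _))]
  exact (hF.measurable.comp hb).sub (hF.measurable.comp ha)

theorem intervalIntegrable_of_abs_le {f : ℝ → ℝ} {a b C : ℝ} (hf : Measurable f)
    (hC : ∀ t, |f t| ≤ C) : IntervalIntegrable f volume a b :=
  intervalIntegrable_const.mono_fun' hf.aestronglyMeasurable (ae_of_all _ hC)

theorem abs_integral_sq_sub_integral_sq_le {f g : ℝ → ℝ} {a b M ε : ℝ} (hab : a ≤ b)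
    (hf : Measurable f) (hg : Measurable g) (hgM : ∀ t, |g t| ≤ M)
    (hfg : ∀ t, |f t - g t| ≤ ε) :
    |(∫ t in a..b, f t ^ 2) - ∫ t in a..b, g t ^ 2| ≤ (b - a) * (ε * (2 * M + ε)) := by
  have hsq : ∀ t, |f t ^ 2 - g t ^ 2| ≤ ε * (2 * M + ε) := fun t => calc
    |f t ^ 2 - g t ^ 2| = |f t - g t| * |2 * g t + (f t - g t)| := by
      rw [← abs_mul]; ring_nf
    _ ≤ ε * (2 * M + ε) := by
      refine mul_le_mul (hfg t) ((abs_add_le _ _).trans (add_le_add ?_ (hfg t)))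
        (abs_nonneg _) ((abs_nonneg _).trans (hfg t))
      rw [abs_mul, abs_two]; linarith [hgM t]
  have hg2 : IntervalIntegrable (fun t => g t ^ 2) volume a b :=
    intervalIntegrable_of_abs_le (hg.pow_const 2) fun t => by
      rw [abs_pow]; exact pow_le_pow_left₀ (abs_nonneg _) (hgM t) 2
  have hdiff : IntervalIntegrable (fun t => f t ^ 2 - g t ^ 2) volume a b :=
    intervalIntegrable_of_abs_le ((hf.pow_const 2).sub (hg.pow_const 2)) hsq
  have hf2 : IntervalIntegrable (fun t => f t ^ 2) volume a b := by
    simpa using hdiff.add hg2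
  rw [← integral_sub hf2 hg2]
  simpa [abs_of_nonneg (sub_nonneg.2 hab), mul_comm] using
    norm_integral_le_of_norm_le_const (a := a) (b := b)
      (f := fun t => f t ^ 2 - g t ^ 2) fun t _ => hsq t

theorem tendsto_nhds_of_forall_eventually_abs_sub_le {ι : Type*} {l : Filter ι} {u : ι → ℝ}
    {a C : ℝ} (h : ∀ ε > 0, ∀ᶠ i in l, |u i - a| ≤ ε * (C + ε)) : Tendsto u l (𝓝 a) := by
  rw [Metric.tendsto_nhds]
  intro η hη
  have hφ : Tendsto (fun ε : ℝ => ε * (C + ε)) (𝓝[>] 0) (𝓝 0) := by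
    have hcont : Continuous fun ε : ℝ => ε * (C + ε) := by fun_prop
    simpa using (hcont.tendsto 0).mono_left nhdsWithin_le_nhds
  obtain ⟨ε, hεη, hε⟩ := ((hφ.eventually (gt_mem_nhds hη)).and self_mem_nhdsWithin).exists
  filter_upwards [h ε hε] with i hi
  exact (Real.dist_eq _ _).trans_le hi |>.trans_lt hεη

theorem abs_integral_sub_affine_le {f : ℝ → ℝ} {a b x c d δ : ℝ} (hab : a ≤ b)
    (hf : IntervalIntegrable f volume a b)
    (hδ : ∀ u ∈ Set.Icc a b, |f u - (c + d * (u - x))| ≤ δ) :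
    |(∫ u in a..b, f u) - (b - a) * (c + d * ((a + b) / 2 - x))| ≤ (b - a) * δ := by
  have haff : ∫ u in a..b, (c + d * (u - x)) = (b - a) * (c + d * ((a + b) / 2 - x)) := by
    rw [integral_add intervalIntegrable_const (Continuous.intervalIntegrable (by fun_prop) _ _),
      intervalIntegral.integral_const,
      intervalIntegral.integral_const_mul,
      integral_comp_sub_right (fun u => u), integral_id, smul_eq_mul]
    ring
  rw [← haff, ← integral_sub hf (Continuous.intervalIntegrable (by fun_prop) _ _)]
  have := norm_integral_le_of_norm_le_const (f := fun u => f u - (c + d * (u - x))) fun u hu =>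
    hδ u (Set.Ioc_subset_Icc_self (Set.uIoc_of_le hab ▸ hu))
  rwa [Real.norm_eq_abs, abs_of_nonneg (sub_nonneg.2 hab), mul_comm] at this

theorem abs_half_sub_fract_le (a : ℝ) : |1 / 2 - Int.fract a| ≤ 1 / 2 :=
  abs_le.2 ⟨by linarith [Int.fract_lt_one a], by linarith [Int.fract_nonneg a]⟩

theorem toy_cell_left_eq (k x t : ℝ) (hk : k ≠ 0) :
    ((⌊k * x + t⌋ : ℝ) - t) / k = x - Int.fract (k * x + t) / k := by
  rw [Int.fract]; field_simp; ring

theorem toy_cell_right_eq (k x t : ℝ) (hk : k ≠ 0) :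
    ((⌊k * x + t⌋ : ℝ) + 1 - t) / k = x + (1 - Int.fract (k * x + t)) / k := by
  rw [Int.fract]; field_simp; ring

theorem eventually_abs_scaled_toy_cell_mean_sub_le {m : ℝ → ℝ} {d x ε : ℝ} (hm : Continuous m)
    (hd : HasDerivAt m d x) (hε : 0 < ε) :
    ∀ᶠ k : ℝ in atTop, ∀ t : ℝ,
      |k * (k * (∫ u in ((⌊k * x + t⌋ : ℝ) - t) / k..((⌊k * x + t⌋ : ℝ) + 1 - t) / k, m u)
        - m x) - d * (1 / 2 - Int.fract (k * x + t))| ≤ ε := by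
  obtain ⟨δ, hδ, hnear⟩ := Metric.eventually_nhds_iff.1 ((hasDerivAt_iff_isLittleO.1 hd).def hε)
  filter_upwards [eventually_gt_atTop δ⁻¹] with k hk t
  have hk0 : 0 < k := (inv_pos.2 hδ).trans hk
  rw [toy_cell_left_eq k x t hk0.ne', toy_cell_right_eq k x t hk0.ne']
  set s := Int.fract (k * x + t)
  have hs : 0 ≤ s ∧ s < 1 := ⟨Int.fract_nonneg _, Int.fract_lt_one _⟩
  have hkδ : 1 / k < δ := by rwa [one_div, inv_lt_comm₀ hk0 hδ]
  have hab : x - s / k ≤ x + (1 - s) / k := by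
    have := div_nonneg hs.1 hk0.le
    have := div_nonneg (sub_nonneg.2 hs.2.le) hk0.le
    linarith
  have htaylor : ∀ u ∈ Set.Icc (x - s / k) (x + (1 - s) / k),
      |m u - (m x + d * (u - x))| ≤ ε / k := by
    intro u hu
    have hux : |u - x| ≤ 1 / k := by
      rw [abs_le]; constructor
      · have : s / k ≤ 1 / k := by gcongr; linarith
        linarith [hu.1]
      · have : (1 - s) / k ≤ 1 / k := by gcongr; linarith
        linarith [hu.2]
    have hlin := hnear (lt_of_le_of_lt (Real.dist_eq u x ▸ hux) hkδ)
    rw [Real.norm_eq_abs, Real.norm_eq_abs, smul_eq_mul] at hlin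
    calc |m u - (m x + d * (u - x))| = |m u - m x - (u - x) * d| := by ring_nf
      _ ≤ ε * |u - x| := hlin
      _ ≤ ε * (1 / k) := by gcongr
      _ = ε / k := by ring
  have hmean := abs_integral_sub_affine_le hab (hm.intervalIntegrable _ _) htaylor
  rw [show x + (1 - s) / k - (x - s / k) = 1 / k by ring,
    show (x - s / k + (x + (1 - s) / k)) / 2 - x = (1 / 2 - s) / k by ring] at hmean
  set I := ∫ u in x - s / k..x + (1 - s) / k, m u
  calc _ = |k ^ 2 * (I - 1 / k * (m x + d * ((1 / 2 - s) / k)))| := by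
        congr 1; field_simp; ring
    _ = k ^ 2 * |I - 1 / k * (m x + d * ((1 / 2 - s) / k))| := by
        rw [abs_mul, abs_of_pos (pow_pos hk0 2)]
    _ ≤ k ^ 2 * (1 / k * (ε / k)) := by gcongr
    _ = ε := by field_simp

theorem measurable_toy_cell_integral {m : ℝ → ℝ} (hm : Continuous m) (k x : ℝ) :
    Measurable fun t : ℝ =>
      ∫ u in ((⌊k * x + t⌋ : ℝ) - t) / k..((⌊k * x + t⌋ : ℝ) + 1 - t) / k, m u := by
  have hfloor : Measurable fun t : ℝ => (⌊k * x + t⌋ : ℝ) :=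
    measurable_from_top.comp (measurable_const_add _).floor
  exact measurable_intervalIntegral_of_continuous hm ((hfloor.sub measurable_id).div_const _)
    (((hfloor.add_const 1).sub measurable_id).div_const _)

theorem toy_tree_approximation_error_general
    (m : ℝ → ℝ) (hm : ContDiff ℝ 3 m) (x : ℝ)
    (ψ : ℕ → ℝ → ℝ)
    (hψ : ψ = fun (k : ℕ) (t : ℝ) =>
      (k : ℝ) * ∫ u in (((⌊(k : ℝ) * x + t⌋ : ℝ) - t) / k)..
          (((⌊(k : ℝ) * x + t⌋ : ℝ) + 1 - t) / k), m u) :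
    Tendsto (fun k : ℕ => (k : ℝ) ^ 2 * ∫ t in (0 : ℝ)..1, (ψ k t - m x) ^ 2)
      atTop (nhds (deriv m x ^ 2 / 12)) := by
  set d := deriv m x
  have hd : HasDerivAt m d x := (hm.differentiable (by norm_num) x).hasDerivAt
  refine tendsto_nhds_of_forall_eventually_abs_sub_le (C := |d|) fun ε hε => ?_
  filter_upwards [(eventually_abs_scaled_toy_cell_mean_sub_le hm.continuous hd hε).natCast_atTop]
    with k hk
  set G : ℝ → ℝ := fun t => d * (1 / 2 - Int.fract ((k : ℝ) * x + t))
  have hψG : ∀ t, |k * (ψ k t - m x) - G t| ≤ ε := by subst hψ; exact hk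
  have hψmeas : Measurable (ψ k) := by
    subst hψ; exact (measurable_toy_cell_integral hm.continuous _ x).const_mul _
  have hG : ∀ t, |G t| ≤ |d| * (1 / 2) := fun t =>
    (abs_mul _ _).trans_le (by gcongr; exact abs_half_sub_fract_le _)
  have hFmeas : Measurable fun t => (k : ℝ) * (ψ k t - m x) := by fun_prop
  have hGmeas : Measurable G := by fun_prop
  calc |(k : ℝ) ^ 2 * (∫ t in (0 : ℝ)..1, (ψ k t - m x) ^ 2) - d ^ 2 / 12|
      = |(∫ t in (0 : ℝ)..1, ((k : ℝ) * (ψ k t - m x)) ^ 2) - ∫ t in (0 : ℝ)..1, G t ^ 2| := by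
        simp only [G, mul_pow, intervalIntegral.integral_const_mul,
          integral_sq_half_sub_fract_add, mul_one_div]
    _ ≤ (1 - 0) * (ε * (2 * (|d| * (1 / 2)) + ε)) :=
        abs_integral_sq_sub_integral_sq_le zero_le_one hFmeas hGmeas hG hψG
    _ = ε * (|d| + ε) := by ring

/-- Approximation error of a single randomized toy tree: for `m` of class `C³` and
`x ∈ (0,1)`, with `ψ k t` the mean of `m` over the cell containing `x` in the toy
partition of mesh `1/k` with offset `t`,
`k² ∫₀¹ (ψ k t − m(x))² dt → m′(x)²/12` as `k → ∞`. -/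
theorem toy_tree_approximation_error
    (m : ℝ → ℝ) (hm : ContDiff ℝ 3 m) (x : ℝ) (hx : x ∈ Set.Ioo (0 : ℝ) 1)
    (ψ : ℕ → ℝ → ℝ)
    (hψ : ψ = fun (k : ℕ) (t : ℝ) =>
      (k : ℝ) * ∫ u in (((⌊(k : ℝ) * x + t⌋ : ℝ) - t) / k)..
          (((⌊(k : ℝ) * x + t⌋ : ℝ) + 1 - t) / k), m u) :
    Tendsto (fun k : ℕ => (k : ℝ) ^ 2 * ∫ t in (0 : ℝ)..1, (ψ k t - m x) ^ 2)
      atTop (nhds (deriv m x ^ 2 / 12)) :=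
  toy_tree_approximation_error_general m hm x ψ hψ
end

section
/- Let m : ℝ → ℝ be three times continuously differentiable and let x ∈ (0,1). For each integer k with 1/k ≤ x ≤ 1 − 1/k and each t ∈ [0,1], define ψ_k(x,t) := k ∫ m(u) du over the interval [(⌊kx+t⌋ − t)/k, (⌊kx+t⌋ + 1 − t)/k] (the cell containing x in the toy partition with offset t). Then lim_{k→∞} k⁴ ( ∫_0^1 ψ_k(x,t) dt − m(x) )² = m″(x)²/144; that is, the approximation error of the infinite toy forest at x is asymptotically c_2(m,x)/k⁴ with c_2(m,x) = m″(x)²/144. -/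
/-!
With `θ = fract (k x + t)`, the cell of offset `t` containing `x` is `[x - θ/k, x + (1 - θ)/k]`,
and since `fract` is `1`-periodic, averaging over `t ∈ [0,1]` is averaging over `θ ∈ [0,1]`.
For a second primitive `G` of `m` this average is exactly the second difference
`k² (G (x + 1/k) + G (x - 1/k) - 2 G x)`, which is `m x + m'' x / (12 k²) + o(k⁻²)`:
three applications of l'Hôpital's rule reduce this expansion to the symmetric derivative of `m'`.
-/

open Filter Topology MeasureTheory intervalIntegral

theorem integral_comp_fract_add_s15 (g : ℝ → ℝ) (a : ℝ) :
    ∫ t in (0 : ℝ)..1, g (Int.fract (a + t)) = ∫ t in (0 : ℝ)..1, g t := by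
  have hper : Function.Periodic (fun t => g (Int.fract t)) 1 :=
    (Int.fract_periodic ℝ).comp g
  calc ∫ t in (0 : ℝ)..1, g (Int.fract (a + t))
      = ∫ t in a..a + 1, g (Int.fract t) := by
        rw [integral_comp_add_left (fun t => g (Int.fract t)), add_zero]
    _ = ∫ t in (0 : ℝ)..0 + 1, g (Int.fract t) := hper.intervalIntegral_add_eq a 0
    _ = ∫ t in (0 : ℝ)..1, g t := by
      rw [zero_add]
      refine integral_congr_ae ?_
      filter_upwards [compl_mem_ae_iff.2 (measure_singleton (1 : ℝ))] with t ht hmem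
      rw [Set.uIoc_of_le zero_le_one] at hmem
      rw [Int.fract_eq_self.2 ⟨hmem.1.le, lt_of_le_of_ne hmem.2 ht⟩]

theorem tendsto_div_pow_succ_of_hasDerivAt {φ φ' : ℝ → ℝ} {L : ℝ} (n : ℕ)
    (hφ : ∀ h, HasDerivAt φ (φ' h) h) (hφ0 : φ 0 = 0)
    (hlim : Tendsto (fun h => φ' h / h ^ n) (𝓝[>] 0) (𝓝 L)) :
    Tendsto (fun h => φ h / h ^ (n + 1)) (𝓝[>] 0) (𝓝 (L / (n + 1))) := by
  refine HasDerivAt.lhopital_zero_nhdsGT (g' := fun h => (n + 1) * h ^ n)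
    (Eventually.of_forall hφ) (Eventually.of_forall fun h => ?_) ?_ ?_ ?_ ?_
  · simpa [mul_comm] using hasDerivAt_pow (n + 1) h
  · filter_upwards [self_mem_nhdsWithin] with h (hh : 0 < h)
    positivity
  · simpa [hφ0] using (hφ 0).continuousAt.tendsto.mono_left nhdsWithin_le_nhds
  · simpa using ((continuous_pow (n + 1)).tendsto' (0 : ℝ) 0 (by simp)).mono_left
      nhdsWithin_le_nhds
  · refine (hlim.div_const (n + 1)).congr fun h => ?_
    rw [div_div, mul_comm (h ^ n)]

section SymmetricDifference

variable {f f' : ℝ → ℝ}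

theorem hasDerivAt_comp_add_add_comp_sub (hf : ∀ y, HasDerivAt f (f' y) y) (x h : ℝ) :
    HasDerivAt (fun h => f (x + h) + f (x - h)) (f' (x + h) - f' (x - h)) h :=
  (((hf _).comp_const_add x h).add ((hf _).comp_const_sub x h)).congr_deriv
    (sub_eq_add_neg _ _).symm

theorem hasDerivAt_comp_add_sub_comp_sub (hf : ∀ y, HasDerivAt f (f' y) y) (x h : ℝ) :
    HasDerivAt (fun h => f (x + h) - f (x - h)) (f' (x + h) + f' (x - h)) h :=
  (((hf _).comp_const_add x h).sub ((hf _).comp_const_sub x h)).congr_deriv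
    (sub_neg_eq_add _ _)

end SymmetricDifference

theorem HasDerivAt.tendsto_symmetric_difference_div {f : ℝ → ℝ} {f' x : ℝ}
    (hf : HasDerivAt f f' x) :
    Tendsto (fun h => (f (x + h) - f (x - h)) / h) (𝓝[>] 0) (𝓝 (2 * f')) := by
  have hsymm : HasDerivAt (fun h => f (x + h) - f (x - h)) (f' + f') 0 :=
    ((HasDerivAt.comp_const_add x 0 (by rwa [add_zero])).sub
      (HasDerivAt.comp_const_sub x 0 (by rwa [sub_zero]))).congr_deriv (sub_neg_eq_add _ _)
  refine (two_mul f' ▸ hsymm.tendsto_slope_zero_right).congr fun h => ?_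
  simp [div_eq_inv_mul]

theorem tendsto_second_difference_sub_div_pow_four {m F G : ℝ → ℝ} {x : ℝ}
    (hF : ∀ y, HasDerivAt F (m y) y) (hG : ∀ y, HasDerivAt G (F y) y)
    (hm : Differentiable ℝ m) (hm' : DifferentiableAt ℝ (deriv m) x) :
    Tendsto (fun h => (G (x + h) + G (x - h) - 2 * G x - h ^ 2 * m x) / h ^ 4) (𝓝[>] 0)
      (𝓝 (deriv (deriv m) x / 12)) := by
  have h3 := hm'.hasDerivAt.tendsto_symmetric_difference_div
  have h2 := tendsto_div_pow_succ_of_hasDerivAt 1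
    (φ := fun h => m (x + h) + m (x - h) - 2 * m x)
    (fun h => (hasDerivAt_comp_add_add_comp_sub (fun y => (hm y).hasDerivAt) x h).sub_const _)
    (by simp; ring) (by simpa using h3)
  have h1 := tendsto_div_pow_succ_of_hasDerivAt 2
    (φ := fun h => F (x + h) - F (x - h) - 2 * h * m x)
    (fun h => ((hasDerivAt_comp_add_sub_comp_sub hF x h).sub
      (((hasDerivAt_id h).const_mul 2).mul_const (m x))).congr_deriv (by simp))
    (by simp) h2
  have h0 := tendsto_div_pow_succ_of_hasDerivAt 3
    (φ := fun h => G (x + h) + G (x - h) - 2 * G x - h ^ 2 * m x)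
    (fun h => (((hasDerivAt_comp_add_add_comp_sub hG x h).sub_const _).sub
      ((hasDerivAt_pow 2 h).mul_const (m x))).congr_deriv (by simp))
    (by simp; ring) h1
  convert h0 using 2
  norm_num
  ring

section ToyForest

variable {m F G : ℝ → ℝ} {k : ℝ}

theorem integral_toy_cell_eq (hF : ∀ y, HasDerivAt F (m y) y) (hm : Continuous m) (hk : k ≠ 0)
    (x t : ℝ) :
    ∫ u in ((⌊k * x + t⌋ - t) / k)..((⌊k * x + t⌋ + 1 - t) / k), m u
      = F (x + (1 - Int.fract (k * x + t)) / k) - F (x - Int.fract (k * x + t) / k) := by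
  rw [integral_eq_sub_of_hasDerivAt (fun y _ => hF y) (hm.intervalIntegrable _ _),
    ← Int.self_sub_floor]
  congr 2 <;> field_simp <;> ring

theorem integral_toy_cell_mean_eq_second_difference (hF : ∀ y, HasDerivAt F (m y) y)
    (hG : ∀ y, HasDerivAt G (F y) y) (hm : Continuous m) (hk : k ≠ 0) (x : ℝ) :
    ∫ t in (0 : ℝ)..1,
        k * ∫ u in ((⌊k * x + t⌋ - t) / k)..((⌊k * x + t⌋ + 1 - t) / k), m u
      = k ^ 2 * (G (x + k⁻¹) + G (x - k⁻¹) - 2 * G x) := by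
  have hFc : Continuous F := continuous_iff_continuousAt.2 fun y => (hF y).continuousAt
  have hprim : ∀ s, HasDerivAt (fun s => -k ^ 2 * (G (x + (1 - s) / k) - G (x - s / k)))
      (k * (F (x + (1 - s) / k) - F (x - s / k))) s := by
    intro s
    have hr : HasDerivAt (fun s => x + (1 - s) / k) (-k⁻¹) s := by
      simpa [div_eq_mul_inv] using (((hasDerivAt_id s).const_sub 1).div_const k).const_add x
    have hl : HasDerivAt (fun s => x - s / k) (-k⁻¹) s := by
      simpa [div_eq_mul_inv] using ((hasDerivAt_id s).div_const k).const_sub x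
    refine ((((hG _).comp s hr).sub ((hG _).comp s hl)).const_mul (-k ^ 2)).congr_deriv ?_
    field_simp
    ring
  calc _ = ∫ t in (0 : ℝ)..1,
        (fun s => k * (F (x + (1 - s) / k) - F (x - s / k))) (Int.fract (k * x + t)) := by
        simp only [integral_toy_cell_eq hF hm hk]
    _ = ∫ s in (0 : ℝ)..1, k * (F (x + (1 - s) / k) - F (x - s / k)) :=
        integral_comp_fract_add_s15 (fun s => k * (F (x + (1 - s) / k) - F (x - s / k))) _
    _ = k ^ 2 * (G (x + k⁻¹) + G (x - k⁻¹) - 2 * G x) := by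
      rw [integral_eq_sub_of_hasDerivAt (fun s _ => hprim s)
        (Continuous.intervalIntegrable (by fun_prop) _ _)]
      ring_nf

end ToyForest

theorem toy_infinite_forest_approximation_error_general
    (m : ℝ → ℝ) (hm : ContDiff ℝ 3 m) (x : ℝ)
    (ψ : ℕ → ℝ → ℝ)
    (hψ : ψ = fun (k : ℕ) (t : ℝ) =>
      (k : ℝ) * ∫ u in (((⌊(k : ℝ) * x + t⌋ : ℝ) - t) / k)..
          (((⌊(k : ℝ) * x + t⌋ : ℝ) + 1 - t) / k), m u) :
    Tendsto (fun k : ℕ => (k : ℝ) ^ 4 * ((∫ t in (0 : ℝ)..1, ψ k t) - m x) ^ 2)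
      atTop (nhds (deriv (deriv m) x ^ 2 / 144)) := by
  have hmc : Continuous m := hm.continuous
  set F := fun y => ∫ u in (0 : ℝ)..y, m u
  have hF : ∀ y, HasDerivAt F (m y) y := fun y => (hmc.integral_hasStrictDerivAt 0 y).hasDerivAt
  have hFc : Continuous F := continuous_iff_continuousAt.2 fun y => (hF y).continuousAt
  have hG : ∀ y, HasDerivAt (fun y => ∫ u in (0 : ℝ)..y, F u) (F y) y :=
    fun y => (hFc.integral_hasStrictDerivAt 0 y).hasDerivAt
  have hlim := (tendsto_second_difference_sub_div_pow_four hF hG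
    (hm.differentiable (by norm_num)) ((hm.of_le (by norm_num)).differentiable_deriv_two x)).comp
    (tendsto_inv_atTop_nhdsGT_zero.comp tendsto_natCast_atTop_atTop)
  rw [show deriv (deriv m) x ^ 2 / 144 = (deriv (deriv m) x / 12) ^ 2 by ring]
  refine (hlim.pow 2).congr' ?_
  filter_upwards [eventually_ne_atTop 0] with k hk
  simp only [Function.comp_apply, hψ,
    integral_toy_cell_mean_eq_second_difference hF hG hmc (Nat.cast_ne_zero.2 hk)]
  field_simp

/-- Approximation error of the infinite toy forest: for `m` of class `C³` and
`x ∈ (0,1)`, with `ψ k t` the mean of `m` over the cell containing `x` in the toy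
partition of mesh `1/k` with offset `t`,
`k⁴ (∫₀¹ ψ k t dt − m(x))² → m″(x)²/144` as `k → ∞`; this is the entry
`c₂(m,x)/k⁴` of Table 1. -/
theorem toy_infinite_forest_approximation_error
    (m : ℝ → ℝ) (hm : ContDiff ℝ 3 m) (x : ℝ) (hx : x ∈ Set.Ioo (0 : ℝ) 1)
    (ψ : ℕ → ℝ → ℝ)
    (hψ : ψ = fun (k : ℕ) (t : ℝ) =>
      (k : ℝ) * ∫ u in (((⌊(k : ℝ) * x + t⌋ : ℝ) - t) / k)..
          (((⌊(k : ℝ) * x + t⌋ : ℝ) + 1 - t) / k), m u) :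
    Tendsto (fun k : ℕ => (k : ℝ) ^ 4 * ((∫ t in (0 : ℝ)..1, ψ k t) - m x) ^ 2)
      atTop (nhds (deriv (deriv m) x ^ 2 / 144)) :=
  toy_infinite_forest_approximation_error_general m hm x ψ hψ
end
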